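/- Let I be an ideal of R, let 𝒫 be a projectivity class closed under direct summands, let P be a projective module with an epimorphism f : P → M. If P ⊕ M has a 𝒫-projective I-cover, then M has a projective I-cover. -/

import Mathlib

open Submodule Function LinearMap

universe u v w x y

section Defs

variable (R : Type u) [Ring R]

/-- `I` (a left ideal) is a two-sided ideal. -/
def IsTwoSidedI (I : Ideal R) : Prop := ∀ a b : R, a ∈ I → a * b ∈ I

variable {M : Type v} [AddCommGroup M] [Module R M]

/-- `N` is PSD in the submodule `T` of `M` (taking `T = ⊤` gives "PSD in `M`"):
whenever `N + X = T`, there is a projective direct summand `S` of `T` with `S ≤ N`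
and `T = S ⊕ X`. -/
def PSDIn (T N : Submodule R M) : Prop :=
  ∀ X : Submodule R M, X ≤ T → N ⊔ X = T →
    ∃ S : Submodule R M, Module.Projective R S ∧ S ≤ N ∧ S ⊔ X = T ∧ S ⊓ X = ⊥

/-- `M` is PSD for the ideal `I`: every submodule of `IM` is PSD in `M`. -/
def PSDFor (I : Ideal R) (M : Type v) [AddCommGroup M] [Module R M] : Prop :=
  ∀ N : Submodule R M, N ≤ I • (⊤ : Submodule R M) → PSDIn R ⊤ N

/-- `R` is a left PSD ring for `I`: every finitely generated free left `R`-module is PSD for `I`. -/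
def PSDRing (I : Ideal R) : Prop :=
  ∀ (F : Type u) [AddCommGroup F] [Module R F] [Module.Free R F] [Module.Finite R F],
    PSDFor R I F

/-- `f : P → M` is a projective `I`-cover. -/
def IsProjICover (I : Ideal R) {P : Type w} [AddCommGroup P] [Module R P]
    (f : P →ₗ[R] M) : Prop :=
  Surjective f ∧ Module.Projective R P ∧
    LinearMap.ker f ≤ I • (⊤ : Submodule R P) ∧ PSDIn R ⊤ (LinearMap.ker f)

/-- A projective `I`-cover of `M`. -/
structure ProjICover (I : Ideal R) (M : Type v) [AddCommGroup M] [Module R M] where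
  P : Type w
  [addP : AddCommGroup P]
  [modP : Module R P]
  f : P →ₗ[R] M
  cover : IsProjICover R I f

/-- `R` is `I`-semiregular. -/
def ISemiregular (I : Ideal R) : Prop :=
  ∀ a : R, ∃ P Q : Submodule R R, IsCompl P Q ∧ Module.Projective R P ∧
    P ≤ Submodule.span R {a} ∧ Submodule.span R {a} ⊓ Q ≤ I

/-- `R` is `I`-semiperfect. -/
def ISemiperfect (I : Ideal R) : Prop :=
  ∀ K : Submodule R R, ∃ A B : Submodule R R, IsCompl A B ∧ Module.Projective R A ∧
    A ≤ K ∧ K ⊓ B ≤ I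

end Defs




section Defs2

variable (R : Type u) [Ring R]
variable {M : Type v} [AddCommGroup M] [Module R M]

/-- A submodule `S` is small in the submodule `T` (take `T = ⊤` for "small in `M`"). -/
def SmallIn (T S : Submodule R M) : Prop :=
  ∀ X : Submodule R M, X ≤ T → S ⊔ X = T → X = T

/-- `K` is DM in the submodule `T` of `M`: whenever `K + X = T` there is a direct
summand `S` of `T` with `S ≤ K` and `S + X = T`. -/
def DMIn (T K : Submodule R M) : Prop :=
  ∀ X : Submodule R M, X ≤ T → K ⊔ X = T →
    ∃ S : Submodule R M, S ≤ K ∧ (∃ S' : Submodule R M, S ⊔ S' = T ∧ S ⊓ S' = ⊥) ∧ S ⊔ X = T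

/-- `M` is DM for `I`: every submodule of `IM` is DM in `M`. -/
def DMFor (I : Ideal R) (M : Type v) [AddCommGroup M] [Module R M] : Prop :=
  ∀ K : Submodule R M, K ≤ I • (⊤ : Submodule R M) → DMIn R ⊤ K

/-- `R` is a left DM ring for `I`. -/
def DMRing (I : Ideal R) : Prop :=
  ∀ (F : Type u) [AddCommGroup F] [Module R F] [Module.Free R F] [Module.Finite R F],
    DMFor R I F

/-- `M` is an `I`-supplemented module. -/
def ISupplemented (I : Ideal R) (M : Type v) [AddCommGroup M] [Module R M] : Prop :=
  ∀ X : Submodule R M, ∃ Y : Submodule R M, Module.Projective R Y ∧ X ⊔ Y = ⊤ ∧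
    X ⊓ Y ≤ I • Y ∧ DMIn R Y (X ⊓ Y)

/-- `M` is a finitely `I`-supplemented module. -/
def FinISupplemented (I : Ideal R) (M : Type v) [AddCommGroup M] [Module R M] : Prop :=
  ∀ X : Submodule R M, X.FG → ∃ Y : Submodule R M, Module.Projective R Y ∧ X ⊔ Y = ⊤ ∧
    X ⊓ Y ≤ I • Y ∧ DMIn R Y (X ⊓ Y)

/-- `M` is a supplemented module. -/
def Supplemented (M : Type v) [AddCommGroup M] [Module R M] : Prop :=
  ∀ X : Submodule R M, ∃ Y : Submodule R M, X ⊔ Y = ⊤ ∧ SmallIn R Y (X ⊓ Y)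

/-- `M` is an `I`-semiperfect module. -/
def ISemiperfectMod (I : Ideal R) (M : Type v) [AddCommGroup M] [Module R M] : Prop :=
  ∀ K : Submodule R M, ∃ A B : Submodule R M, IsCompl A B ∧ Module.Projective R A ∧
    A ≤ K ∧ K ⊓ B ≤ I • (⊤ : Submodule R M)

/-- The radical of `M`: the intersection of all maximal submodules. -/
def RadM (M : Type v) [AddCommGroup M] [Module R M] : Submodule R M :=
  sInf {N : Submodule R M | IsCoatom N}

/-- The socle of `M`: the sum of all simple submodules. -/
def SocM (M : Type v) [AddCommGroup M] [Module R M] : Submodule R M :=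
  sSup {N : Submodule R M | IsSimpleModule R N}

/-- `P` is locally projective (lifting version). -/
def LocallyProjective (P : Type w) [AddCommGroup P] [Module R P] : Prop :=
  ∀ (A : Type x) (B : Type y) [AddCommGroup A] [Module R A] [AddCommGroup B] [Module R B]
    (g : A →ₗ[R] B) (f : P →ₗ[R] B), Surjective g →
      ∀ P₀ : Submodule R P, P₀.FG → ∃ h : P →ₗ[R] A, ∀ p ∈ P₀, f p = g (h p)

/-- `P` is locally projective (splitting version). -/
def LocallyProjectiveB (P : Type w) [AddCommGroup P] [Module R P] : Prop :=
  ∀ (N : Type x) [AddCommGroup N] [Module R N] (g : N →ₗ[R] P), Surjective g →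
    ∀ P₀ : Submodule R P, P₀.FG → ∃ h : P →ₗ[R] N, ∀ p ∈ P₀, g (h p) = p


/-- A locally projective `I`-cover of `M`. -/
structure LocProjICover (I : Ideal R) (M : Type v) [AddCommGroup M] [Module R M] where
  P : Type w
  [addP : AddCommGroup P]
  [modP : Module R P]
  f : P →ₗ[R] M
  surj : Surjective f
  locProj : LocallyProjective.{u, w, x, y} R P
  ker_le : LinearMap.ker f ≤ I • (⊤ : Submodule R P)
  psd : PSDIn R ⊤ (LinearMap.ker f)

/-- A locally projective cover of `M`. -/
structure LocProjCover (M : Type v) [AddCommGroup M] [Module R M] where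
  P : Type w
  [addP : AddCommGroup P]
  [modP : Module R P]
  f : P →ₗ[R] M
  surj : Surjective f
  locProj : LocallyProjective.{u, w, x, y} R P
  ker_small : SmallIn R ⊤ (LinearMap.ker f)

/-- A projective cover of `M`. -/
structure ProjCover (M : Type v) [AddCommGroup M] [Module R M] where
  P : Type w
  [addP : AddCommGroup P]
  [modP : Module R P]
  f : P →ₗ[R] M
  surj : Surjective f
  proj : Module.Projective R P
  ker_small : SmallIn R ⊤ (LinearMap.ker f)

/-- `M` is self-projective (quasi-projective). -/
def SelfProjective (M : Type v) [AddCommGroup M] [Module R M] : Prop :=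
  ∀ (K : Submodule R M) (f : M →ₗ[R] M ⧸ K), ∃ h : M →ₗ[R] M, K.mkQ ∘ₗ h = f

/-- A projectivity class of `R`-modules (in a fixed universe). -/
def ProjectivityClass
    (Pc : ∀ (N : Type w) [AddCommGroup N] [Module R N], Prop) : Prop :=
  (∀ (N : Type w) [AddCommGroup N] [Module R N], SelfProjective R N → Pc N) ∧
  (∀ (N P : Type w) [AddCommGroup N] [Module R N] [AddCommGroup P] [Module R P]
      (f : P →ₗ[R] N), Surjective f → Module.Projective R P → Pc (P × N) →
        Module.Projective R N)

/-- `Pc` is closed under direct summands. -/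
def ClosedUnderSummands
    (Pc : ∀ (N : Type w) [AddCommGroup N] [Module R N], Prop) : Prop :=
  ∀ (N P : Type w) [AddCommGroup N] [Module R N] [AddCommGroup P] [Module R P],
    Pc P → ∀ (i : N →ₗ[R] P) (p : P →ₗ[R] N), p ∘ₗ i = LinearMap.id → Pc N

/-- A `Pc`-projective `I`-cover of `M`. -/
structure PProjICover (Pc : ∀ (N : Type w) [AddCommGroup N] [Module R N], Prop)
    (I : Ideal R) (M : Type v) [AddCommGroup M] [Module R M] where
  Q : Type w
  [addQ : AddCommGroup Q]
  [modQ : Module R Q]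
  g : Q →ₗ[R] M
  surj : Surjective g
  memP : Pc Q
  ker_le : LinearMap.ker g ≤ I • (⊤ : Submodule R Q)
  psd : PSDIn R ⊤ (LinearMap.ker g)

end Defs2

/-! Since `P` is projective, the first component of `g : Q → P × M` splits, so
`Q = s(P) ⊕ N` with `N = ker (fst ∘ g)`, and `g` restricts to an epimorphism `N → M` with the
same kernel `K`. As a direct summand of `Q`, `N` inherits `K ≤ I N` and the PSD property of `K`.
To see that `N` is projective, lift `f` to `ψ : P → N`; then `K + ψ(P) = N`, so PSD splits
`N = S ⊕ ψ(P)` with `S` projective. Now `P × ψ(P)` is a direct summand of `P × N ≅ Q`, hence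
lies in `𝒫`, and the projectivity-class axiom for `P ↠ ψ(P)` makes `ψ(P)` projective. -/

section Summands

variable {R : Type u} [Ring R] {Q : Type v} [AddCommGroup Q] [Module R Q]

theorem isCompl_range_ker_of_comp_eq_id {E : Type*} [AddCommGroup E] [Module R E]
    {π : Q →ₗ[R] E} {s : E →ₗ[R] Q} (h : π ∘ₗ s = LinearMap.id) :
    IsCompl (range s) (ker π) := by
  have hidem : IsIdempotentElem (s ∘ₗ π) := by
    change s ∘ₗ (π ∘ₗ s) ∘ₗ π = s ∘ₗ π
    rw [h, LinearMap.id_comp]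
  have hπ : range π = ⊤ := range_eq_top.2 (surjective_of_comp_eq_id s π h)
  have hs : ker s = ⊥ := ker_eq_bot.2 (injective_of_comp_eq_id s π h)
  simpa only [range_comp_of_range_eq_top s hπ, ker_comp_of_ker_eq_bot π hs] using hidem.isCompl

theorem comap_subtype_smul_top_le_of_isCompl (I : Ideal R) {N C : Submodule R Q}
    (h : IsCompl N C) : (I • ⊤ : Submodule R Q).comap N.subtype ≤ I • ⊤ := by
  intro x hx
  have hmap := mem_map_of_mem (f := N.projectionOnto C h) (mem_comap.1 hx)
  rw [map_smul'', subtype_apply, projectionOnto_apply_left] at hmap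
  exact SetLike.le_def.1 (smul_mono_right I le_top) hmap

theorem ker_sup_range_eq_top_of_surjective_comp {N M P : Type*} [AddCommGroup N] [Module R N]
    [AddCommGroup M] [Module R M] [AddCommGroup P] [Module R P] {φ : N →ₗ[R] M}
    {ψ : P →ₗ[R] N} (h : Surjective (φ ∘ₗ ψ)) : ker φ ⊔ range ψ = ⊤ := by
  rw [sup_comm, ← comap_map_eq, ← range_comp, range_eq_top.2 h, comap_top]

theorem PSDIn.of_isCompl {K N C : Submodule R Q} (hK : PSDIn R ⊤ K) (hKN : K ≤ N)
    (hNC : IsCompl N C) : PSDIn R N K := by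
  intro X hXN hKX
  obtain ⟨S, hS, hSK, hsup, hinf⟩ :=
    hK (X ⊔ C) le_top (by rw [← sup_assoc, hKX, hNC.sup_eq_top])
  refine ⟨S, hS, hSK, ?_, eq_bot_iff.2 ((inf_le_inf_left S le_sup_left).trans hinf.le)⟩
  calc S ⊔ X = S ⊔ X ⊔ C ⊓ N := by rw [hNC.symm.inf_eq_bot, sup_bot_eq]
    _ = (S ⊔ X ⊔ C) ⊓ N := (sup_inf_assoc_of_le C (sup_le (hSK.trans hKN) hXN)).symm
    _ = N := by rw [sup_assoc, hsup, top_inf_eq]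

theorem PSDIn.comap_subtype {K N : Submodule R Q} (hK : PSDIn R N K) (hKN : K ≤ N) :
    PSDIn R ⊤ (K.comap N.subtype) := by
  have hmap : Injective (map N.subtype) := map_injective_of_injective N.injective_subtype
  intro X _ hKX
  obtain ⟨S, hS, hSK, hsup, hinf⟩ := hK (X.map N.subtype) (map_subtype_le N X) (by
    simpa only [Submodule.map_sup, map_comap_subtype, inf_eq_right.2 hKN, map_subtype_top]
      using congrArg (map N.subtype) hKX)
  have hSN := hSK.trans hKN
  have := hS
  refine ⟨S.comap N.subtype, .of_equiv (comapSubtypeEquivOfLe hSN).symm, comap_mono hSK,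
    hmap ?_, hmap ?_⟩
  · rw [Submodule.map_sup, map_comap_subtype, inf_eq_right.2 hSN, hsup, map_subtype_top]
  · rw [map_inf _ N.injective_subtype, map_comap_subtype, inf_eq_right.2 hSN, hinf,
      Submodule.map_bot]

end Summands

section ProjectivityClass

variable {R : Type u} [Ring R] {Pc : ∀ (N : Type w) [AddCommGroup N] [Module R N], Prop}

theorem ClosedUnderSummands.of_linearEquiv (hcl : ClosedUnderSummands R Pc) {N P : Type w}
    [AddCommGroup N] [Module R N] [AddCommGroup P] [Module R P] (hP : Pc P)
    (e : N ≃ₗ[R] P) : Pc N :=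
  hcl N P hP e e.symm (LinearMap.ext e.symm_apply_apply)

theorem ProjectivityClass.projective_of_psdIn (hPc : ProjectivityClass R Pc)
    (hcl : ClosedUnderSummands R Pc) {P N : Type w} [AddCommGroup P] [Module R P]
    [AddCommGroup N] [Module R N] [Module.Projective R P] (hPN : Pc (P × N))
    {K : Submodule R N} (hK : PSDIn R ⊤ K) (ψ : P →ₗ[R] N) (hψ : K ⊔ range ψ = ⊤) :
    Module.Projective R N := by
  obtain ⟨S, hS, -, hsup, hinf⟩ := hK (range ψ) le_top hψ
  have hSψ : IsCompl S (range ψ) := ⟨disjoint_iff.2 hinf, codisjoint_iff.2 hsup⟩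
  have hPψ : Pc (P × range ψ) :=
    hcl _ _ hPN (prodMap LinearMap.id (range ψ).subtype)
      (prodMap LinearMap.id ((range ψ).projectionOnto S hSψ.symm)) (by ext <;> simp)
  have := hS
  have : Module.Projective R (range ψ) :=
    hPc.2 _ P ψ.rangeRestrict ψ.surjective_rangeRestrict inferInstance hPψ
  exact .of_equiv (prodEquivOfIsCompl S (range ψ) hSψ)

end ProjectivityClass

section KerFst

variable {R : Type u} [Ring R] {Q P M : Type*} [AddCommGroup Q] [Module R Q]
  [AddCommGroup P] [Module R P] [AddCommGroup M] [Module R M] (g : Q →ₗ[R] P × M)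

theorem surjective_snd_comp_ker_fst_subtype (hg : Surjective g) :
    Surjective (snd R P M ∘ₗ g ∘ₗ (ker (fst R P M ∘ₗ g)).subtype) := by
  intro m
  obtain ⟨q, hq⟩ := hg (0, m)
  exact ⟨⟨q, by simp [hq]⟩, by simp [hq]⟩

theorem ker_snd_comp_ker_fst_subtype :
    ker (snd R P M ∘ₗ g ∘ₗ (ker (fst R P M ∘ₗ g)).subtype) =
      (ker g).comap (ker (fst R P M ∘ₗ g)).subtype := by
  ext ⟨q, hq⟩
  change (g q).2 = 0 ↔ g q = 0
  exact ⟨fun h2 => Prod.ext (mem_ker.1 hq) h2, fun h => by rw [h, Prod.snd_zero]⟩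

end KerFst

theorem stmt12_general {R : Type u} [Ring R] (I : Ideal R)
    (Pc : ∀ (N : Type w) [AddCommGroup N] [Module R N], Prop)
    (hPc : ProjectivityClass R Pc) (hcl : ClosedUnderSummands R Pc)
    {P M : Type w} [AddCommGroup P] [Module R P] [AddCommGroup M] [Module R M]
    [Module.Projective R P] (f : P →ₗ[R] M) (hf : Surjective f)
    (h : Nonempty (PProjICover R Pc I (P × M))) :
    Nonempty (ProjICover.{u, w, w} R I M) := by
  obtain ⟨⟨Q, g, hg, hQ, hgI, hgpsd⟩⟩ := h
  let π : Q →ₗ[R] P := fst R P M ∘ₗ g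
  have hπ : Surjective π := Prod.fst_surjective.comp hg
  obtain ⟨s, hs⟩ := Module.projective_lifting_property π LinearMap.id hπ
  have hsN : IsCompl (range s) (ker π) := isCompl_range_ker_of_comp_eq_id hs
  have hgN : ker g ≤ ker π := ker_le_ker_comp g _
  have hPN : Pc (P × ker π) := hcl.of_linearEquiv hQ <|
    (LinearEquiv.ofInjective s (injective_of_comp_eq_id s π hs)).prodCongr
      (LinearEquiv.refl R _) ≪≫ₗ prodEquivOfIsCompl _ _ hsN
  let φ : ker π →ₗ[R] M := snd R P M ∘ₗ g ∘ₗ (ker π).subtype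
  have hφ : Surjective φ := surjective_snd_comp_ker_fst_subtype g hg
  have hkerφ : ker φ = (ker g).comap (ker π).subtype := ker_snd_comp_ker_fst_subtype g
  have hφI : ker φ ≤ I • ⊤ :=
    hkerφ ▸ (comap_mono hgI).trans (comap_subtype_smul_top_le_of_isCompl I hsN.symm)
  have hφpsd : PSDIn R ⊤ (ker φ) := hkerφ ▸ (hgpsd.of_isCompl hgN hsN.symm).comap_subtype hgN
  obtain ⟨ψ, hψ⟩ := Module.projective_lifting_property φ f hφ
  have := hPc.projective_of_psdIn hcl hPN hφpsd ψ
    (ker_sup_range_eq_top_of_surjective_comp (hψ ▸ hf))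
  exact ⟨⟨ker π, φ, hφ, inferInstance, hφI, hφpsd⟩⟩

theorem stmt12 {R : Type u} [Ring R] (I : Ideal R) (hI : IsTwoSidedI R I)
    (Pc : ∀ (N : Type w) [AddCommGroup N] [Module R N], Prop)
    (hPc : ProjectivityClass R Pc) (hcl : ClosedUnderSummands R Pc)
    {P M : Type w} [AddCommGroup P] [Module R P] [AddCommGroup M] [Module R M]
    [Module.Projective R P] (f : P →ₗ[R] M) (hf : Surjective f)
    (h : Nonempty (PProjICover R Pc I (P × M))) :
    Nonempty (ProjICover.{u, w, w} R I M) :=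
  stmt12_general I Pc hPc hcl f hf h
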